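/- Let (μ(t))_{t≥0} be a solution of the full selection–mutation model with mutation kernel γ. Then for all t ≥ 0, min{k_𝔮, μ(0)(Q)} ≤ μ(t)(Q) ≤ max{μ(0)(Q), K_𝔔}. -/

import Mathlib

open MeasureTheory Filter Set Topology

noncomputable section

/-- Birth and mortality rates `f₁`, `f₂` on `ℝ × Q` satisfying assumptions (A1)-(A2). -/
structure EGTRates (Q : Type*) [MetricSpace Q] where
  f₁ : ℝ → Q → ℝ
  f₂ : ℝ → Q → ℝ
  f₁_nonneg : ∀ X q, 0 ≤ f₁ X q
  f₂_nonneg : ∀ X q, 0 ≤ f₂ X q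
  f₁_lip : ∀ C : ℝ, ∃ L : ℝ, 0 ≤ L ∧ ∀ q : Q, ∀ X ∈ Set.Icc (-C) C, ∀ Y ∈ Set.Icc (-C) C,
    |f₁ X q - f₁ Y q| ≤ L * |X - Y|
  f₂_lip : ∀ C : ℝ, ∃ L : ℝ, 0 ≤ L ∧ ∀ q : Q, ∀ X ∈ Set.Icc (-C) C, ∀ Y ∈ Set.Icc (-C) C,
    |f₂ X q - f₂ Y q| ≤ L * |X - Y|
  f₁_anti : ∀ q, AntitoneOn (fun X => f₁ X q) (Set.Ici 0)
  f₂_mono : ∀ q, MonotoneOn (fun X => f₂ X q) (Set.Ici 0)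
  f₁_cont : ∀ X, Continuous fun q => f₁ X q
  f₂_cont : ∀ X, Continuous fun q => f₂ X q
  f₂_inf_pos : ∃ ϖ : ℝ, 0 < ϖ ∧ ∀ q, ϖ ≤ f₂ 0 q

namespace EGTRates

variable {Q : Type*} [MetricSpace Q]

/-- The reproductive number `R(X,q) = f₁(X,q)/f₂(X,q)`. -/
def R (M : EGTRates Q) (X : ℝ) (q : Q) : ℝ := M.f₁ X q / M.f₂ X q

/-- The carrying capacity `K(q)`. -/
def carCap (M : EGTRates Q) (q : Q) : ℝ :=
  if 1 ≤ M.R 0 q then sInf {K : ℝ | 0 ≤ K ∧ M.R K q ≤ 1} else 0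

/-- Assumptions (A3)-(A5) relative to a fittest strategy `𝔔` and a least fit strategy `𝔮`. -/
def Assumptions (M : EGTRates Q) (𝔔 𝔮 : Q) : Prop :=
  (∀ q, M.R 0 q ≤ M.R 0 𝔔) ∧ (∀ q, M.R 0 𝔮 ≤ M.R 0 q) ∧
  (∃ X, 0 ≤ X ∧ M.R X 𝔔 ≤ 1) ∧
  (∀ q qq : Q, ∀ Y : ℝ, 0 ≤ Y →
      (M.R 0 qq < M.R 0 q → M.R Y qq < M.R Y q) ∧
      (M.R 0 q = M.R 0 qq → M.R Y q = M.R Y qq)) ∧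
  (1 ≤ M.R 0 𝔔 → M.R (M.carCap 𝔔) 𝔔 = 1 ∧ ∀ x, 0 ≤ x → M.R x 𝔔 = 1 → x = M.carCap 𝔔) ∧
  (1 ≤ M.R 0 𝔮 → M.R (M.carCap 𝔮) 𝔮 = 1 ∧ ∀ x, 0 ≤ x → M.R x 𝔮 = 1 → x = M.carCap 𝔮)

/-- The class of fittest strategies `[𝔔]_R`. -/
def fittestClass (M : EGTRates Q) (𝔔 : Q) : Set Q := {q | M.R 0 q = M.R 0 𝔔}

end EGTRates

/-- Support of a Borel measure: points all of whose neighborhoods have positive measure. -/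
def msupport {Q : Type*} [MetricSpace Q] [MeasurableSpace Q] (μ : Measure Q) : Set Q :=
  {q | ∀ ε : ℝ, 0 < ε → 0 < μ (Metric.ball q ε)}

/-- A solution of the full selection–mutation model with mutation kernel `γ`. -/
def IsSelMutSolution {Q : Type*} [MetricSpace Q] [MeasurableSpace Q] [BorelSpace Q]
    (M : EGTRates Q) (γ : Q → ProbabilityMeasure Q) (μ : ℝ → Measure Q) : Prop :=
  (∀ t, IsFiniteMeasure (μ t)) ∧
  ∀ t ∈ Set.Ici (0:ℝ), ∀ E : Set Q, MeasurableSet E →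
    HasDerivWithinAt (fun s => (μ s E).toReal)
      ((∫ qq, M.f₁ (μ t Set.univ).toReal qq * ((γ qq : Measure Q) E).toReal ∂(μ t)) -
        ∫ qq in E, M.f₂ (μ t Set.univ).toReal qq ∂(μ t)) (Set.Ici 0) t

/-- A solution of the pure selection (replicator) model. -/
def IsPureSelectionSolution {Q : Type*} [MetricSpace Q] [MeasurableSpace Q] [BorelSpace Q]
    (M : EGTRates Q) (μ : ℝ → Measure Q) : Prop :=
  (∀ t, IsFiniteMeasure (μ t)) ∧
  ∀ t ∈ Set.Ici (0:ℝ), ∀ E : Set Q, MeasurableSet E →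
    HasDerivWithinAt (fun s => (μ s E).toReal)
      (∫ q in E, (M.f₁ (μ t Set.univ).toReal q - M.f₂ (μ t Set.univ).toReal q) ∂(μ t))
      (Set.Ici 0) t

/-!
The total mass `X(t) = μ(t)(Q)` satisfies `X' = ∫ (f₁(X, ·) - f₂(X, ·)) dμ(t)`: every `γ(q)` is a
probability measure, so mutation only redistributes offspring. By (A4) the reproductive number of
every strategy lies between those of `𝔮` and `𝔔` at every population size, so `f₁ ≤ f₂` on all of
`Q` once `X ≥ K_𝔔` and `f₂ ≤ f₁` once `0 < X ≤ k_𝔮`. Hence `X` cannot cross either bound.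
-/

theorem image_le_of_deriv_nonpos_above {f f' : ℝ → ℝ} {a B : ℝ}
    (hf : ∀ t ∈ Ici a, HasDerivWithinAt f (f' t) (Ici a) t) (ha : f a ≤ B)
    (hB : ∀ t ∈ Ioi a, B < f t → f' t ≤ 0) : ∀ t ∈ Ici a, f t ≤ B := by
  intro t ht
  by_contra! hBt
  have hcont : ContinuousOn f (Ici a) := fun x hx => (hf x hx).continuousWithinAt
  set S := Icc a t ∩ f ⁻¹' Iic B
  have hS_closed : IsClosed S :=
    (hcont.mono Icc_subset_Ici_self).preimage_isClosed_of_isClosed isClosed_Icc isClosed_Iic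
  have hS_bdd : BddAbove S := bddAbove_Icc.mono inter_subset_left
  -- `s` is the last time in `[a, t]` at which `f ≤ B`; after it `f` is above `B`, hence decreasing
  obtain ⟨⟨has, hst⟩, hfs⟩ : sSup S ∈ S :=
    hS_closed.csSup_mem ⟨a, left_mem_Icc.2 ht, ha⟩ hS_bdd
  set s := sSup S
  have h_above : ∀ x ∈ Ioo s t, B < f x := fun x hx => by
    by_contra! hx'
    exact (le_csSup hS_bdd ⟨⟨has.trans hx.1.le, hx.2.le⟩, hx'⟩).not_gt hx.1
  have hanti : AntitoneOn f (Icc s t) := by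
    have hsub : Icc s t ⊆ Ici a := fun x hx => has.trans hx.1
    refine antitoneOn_of_hasDerivWithinAt_nonpos (f' := f') (convex_Icc s t) (hcont.mono hsub) ?_ ?_
      <;> rw [interior_Icc] <;> intro x hx
    · exact (hf x (hsub (Ioo_subset_Icc_self hx))).mono (Ioo_subset_Icc_self.trans hsub)
    · exact hB x (has.trans_lt hx.1) (h_above x hx)
  exact ((hanti ⟨le_rfl, hst⟩ ⟨hst, le_rfl⟩ hst).trans hfs).not_gt hBt

theorem le_image_of_deriv_nonneg_below {f f' : ℝ → ℝ} {a B : ℝ}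
    (hf : ∀ t ∈ Ici a, HasDerivWithinAt f (f' t) (Ici a) t) (ha : B ≤ f a)
    (hB : ∀ t ∈ Ioi a, f t < B → 0 ≤ f' t) : ∀ t ∈ Ici a, B ≤ f t := by
  intro t ht
  have := image_le_of_deriv_nonpos_above (f := -f) (f' := -f') (B := -B)
    (fun t ht => (hf t ht).neg) (neg_le_neg ha)
    (fun t ht h => neg_nonpos.2 (hB t ht (neg_lt_neg_iff.1 h))) t ht
  exact neg_le_neg_iff.1 this

namespace EGTRates

variable {Q : Type*} [MetricSpace Q] (M : EGTRates Q)

theorem f₂_pos (q : Q) {X : ℝ} (hX : 0 ≤ X) : 0 < M.f₂ X q := by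
  obtain ⟨ϖ, hϖ, hϖ_le⟩ := M.f₂_inf_pos
  exact hϖ.trans_le ((hϖ_le q).trans (M.f₂_mono q self_mem_Ici hX hX))

theorem R_le_one_iff (q : Q) {X : ℝ} (hX : 0 ≤ X) : M.R X q ≤ 1 ↔ M.f₁ X q ≤ M.f₂ X q :=
  div_le_one (M.f₂_pos q hX)

theorem one_le_R_iff (q : Q) {X : ℝ} (hX : 0 ≤ X) : 1 ≤ M.R X q ↔ M.f₂ X q ≤ M.f₁ X q :=
  one_le_div (M.f₂_pos q hX)

theorem R_antitoneOn (q : Q) : AntitoneOn (fun X => M.R X q) (Ici 0) := fun a ha _ _ hab =>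
  div_le_div₀ (M.f₁_nonneg a q) (M.f₁_anti q ha (ha.trans hab) hab) (M.f₂_pos q ha)
    (M.f₂_mono q ha (ha.trans hab) hab)

-- holds also when no `K ≥ 0` has `R(K, q) ≤ 1`, as then `sInf ∅ = 0`
theorem carCap_nonneg (q : Q) : 0 ≤ M.carCap q := by
  unfold carCap
  split_ifs
  exacts [Real.sInf_nonneg fun _ hK => hK.1, le_rfl]

theorem one_le_R_zero_of_carCap_pos {q : Q} (h : 0 < M.carCap q) : 1 ≤ M.R 0 q := by
  by_contra h1
  simp [carCap, h1] at h

variable {M} {𝔔 𝔮 : Q}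

theorem Assumptions.R_le_R_of_R_zero_le (hA : M.Assumptions 𝔔 𝔮) {q q' : Q} {Y : ℝ} (hY : 0 ≤ Y)
    (h : M.R 0 q ≤ M.R 0 q') : M.R Y q ≤ M.R Y q' := by
  rcases h.lt_or_eq with h | h
  · exact ((hA.2.2.2.1 q' q Y hY).1 h).le
  · exact ((hA.2.2.2.1 q q' Y hY).2 h).le

theorem Assumptions.R_le_one_of_carCap_le (hA : M.Assumptions 𝔔 𝔮) (q : Q) {X : ℝ}
    (hX : M.carCap 𝔔 ≤ X) : M.R X q ≤ 1 := by
  have hX₀ : 0 ≤ X := (M.carCap_nonneg 𝔔).trans hX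
  calc M.R X q ≤ M.R X 𝔔 := hA.R_le_R_of_R_zero_le hX₀ (hA.1 q)
    _ ≤ 1 := by
      by_cases h1 : 1 ≤ M.R 0 𝔔
      · exact (M.R_antitoneOn 𝔔 (M.carCap_nonneg 𝔔) hX₀ hX).trans_eq (hA.2.2.2.2.1 h1).1
      · exact (M.R_antitoneOn 𝔔 self_mem_Ici hX₀ hX₀).trans (not_le.1 h1).le

theorem Assumptions.one_le_R_of_le_carCap (hA : M.Assumptions 𝔔 𝔮) (q : Q) {X : ℝ}
    (hX : 0 < X) (hk : X ≤ M.carCap 𝔮) : 1 ≤ M.R X q := by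
  have h1 : 1 ≤ M.R 0 𝔮 := M.one_le_R_zero_of_carCap_pos (hX.trans_le hk)
  calc 1 = M.R (M.carCap 𝔮) 𝔮 := (hA.2.2.2.2.2 h1).1.symm
    _ ≤ M.R X 𝔮 := M.R_antitoneOn 𝔮 hX.le (M.carCap_nonneg 𝔮) hk
    _ ≤ M.R X q := hA.R_le_R_of_R_zero_le hX.le (hA.2.1 q)

variable [CompactSpace Q] [MeasurableSpace Q] [BorelSpace Q] (ν : Measure Q) [IsFiniteMeasure ν]

theorem integrable_f₁ (X : ℝ) : Integrable (M.f₁ X) ν :=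
  (M.f₁_cont X).integrable_of_hasCompactSupport (.of_compactSpace _)

theorem integrable_f₂ (X : ℝ) : Integrable (M.f₂ X) ν :=
  (M.f₂_cont X).integrable_of_hasCompactSupport (.of_compactSpace _)

theorem Assumptions.integral_f₁_le_integral_f₂ (hA : M.Assumptions 𝔔 𝔮)
    (h : M.carCap 𝔔 ≤ (ν univ).toReal) :
    ∫ q, M.f₁ (ν univ).toReal q ∂ν ≤ ∫ q, M.f₂ (ν univ).toReal q ∂ν :=
  integral_mono (M.integrable_f₁ ν _) (M.integrable_f₂ ν _) fun q =>
    (M.R_le_one_iff q ENNReal.toReal_nonneg).1 (hA.R_le_one_of_carCap_le q h)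

theorem Assumptions.integral_f₂_le_integral_f₁ (hA : M.Assumptions 𝔔 𝔮)
    (h : (ν univ).toReal ≤ M.carCap 𝔮) :
    ∫ q, M.f₂ (ν univ).toReal q ∂ν ≤ ∫ q, M.f₁ (ν univ).toReal q ∂ν := by
  rcases eq_or_ne ν 0 with rfl | hν
  · simp
  have hX : 0 < (ν univ).toReal :=
    ENNReal.toReal_pos (Measure.measure_univ_ne_zero.2 hν) (measure_ne_top ν univ)
  exact integral_mono (M.integrable_f₂ ν _) (M.integrable_f₁ ν _) fun q =>
    (M.one_le_R_iff q hX.le).1 (hA.one_le_R_of_le_carCap q hX h)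

end EGTRates

theorem IsSelMutSolution.hasDerivWithinAt_mass {Q : Type*} [MetricSpace Q] [MeasurableSpace Q]
    [BorelSpace Q] {M : EGTRates Q} {γ : Q → ProbabilityMeasure Q} {μ : ℝ → Measure Q}
    (hμ : IsSelMutSolution M γ μ) {t : ℝ} (ht : t ∈ Ici 0) :
    HasDerivWithinAt (fun s => (μ s univ).toReal)
      ((∫ q, M.f₁ (μ t univ).toReal q ∂μ t) - ∫ q, M.f₂ (μ t univ).toReal q ∂μ t) (Ici 0) t := by
  simpa [setIntegral_univ] using hμ.2 t ht univ MeasurableSet.univ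

theorem selMut_total_population_bounds_general
    {Q : Type*} [MetricSpace Q] [CompactSpace Q] [MeasurableSpace Q] [BorelSpace Q]
    (M : EGTRates Q) (𝔔 𝔮 : Q) (hA : M.Assumptions 𝔔 𝔮)
    (γ : Q → ProbabilityMeasure Q)
    (μ : ℝ → Measure Q) (hμ : IsSelMutSolution M γ μ) :
    ∀ t ∈ Set.Ici (0:ℝ),
      min (M.carCap 𝔮) ((μ 0) Set.univ).toReal ≤ ((μ t) Set.univ).toReal ∧
      ((μ t) Set.univ).toReal ≤ max ((μ 0) Set.univ).toReal (M.carCap 𝔔) := by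
  have hmass := fun s (hs : s ∈ Ici (0 : ℝ)) => hμ.hasDerivWithinAt_mass hs
  have : ∀ s, IsFiniteMeasure (μ s) := hμ.1
  intro t ht
  refine ⟨le_image_of_deriv_nonneg_below hmass (min_le_right _ _) (fun s _ hs => ?_) t ht,
    image_le_of_deriv_nonpos_above hmass (le_max_left _ _) (fun s _ hs => ?_) t ht⟩
  · exact sub_nonneg.2 (hA.integral_f₂_le_integral_f₁ (μ s) (hs.le.trans (min_le_left _ _)))
  · exact sub_nonpos.2 (hA.integral_f₁_le_integral_f₂ (μ s) ((le_max_right _ _).trans hs.le))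

/-- Bounds for solutions of the full selection–mutation model:
`min{k_𝔮, μ(0)(Q)} ≤ μ(t)(Q) ≤ max{μ(0)(Q), K_𝔔}` for all `t ≥ 0`. -/
theorem selMut_total_population_bounds
    {Q : Type*} [MetricSpace Q] [CompactSpace Q] [MeasurableSpace Q] [BorelSpace Q]
    (M : EGTRates Q) (𝔔 𝔮 : Q) (hA : M.Assumptions 𝔔 𝔮)
    (γ : Q → ProbabilityMeasure Q) (hγ : Continuous γ)
    (μ : ℝ → Measure Q) (hμ : IsSelMutSolution M γ μ) :
    ∀ t ∈ Set.Ici (0:ℝ),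
      min (M.carCap 𝔮) ((μ 0) Set.univ).toReal ≤ ((μ t) Set.univ).toReal ∧
      ((μ t) Set.univ).toReal ≤ max ((μ 0) Set.univ).toReal (M.carCap 𝔔) :=
  selMut_total_population_bounds_general M 𝔔 𝔮 hA γ μ hμ
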